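/- Let 𝒞 ⊂ ℝⁿ be open, bounded and convex, and F ∈ H²(ℝⁿ + i𝒞). Fix k ∈ {1,...,n}, fix θ_j ∈ ℝ for j ≠ k, and let K ⊂ 𝒞 be compact. Then sup_{λ ∈ K} |F(θ₁,...,θ_k,...,θ_n + iλ)| → 0 as |θ_k| → ∞. -/

import Mathlib

/-!
`|F|²` is subharmonic in each variable (`F²` has the mean value property on circles), so
integrating over a polydisc of radius `r` about `c` gives `(πr²)ⁿ |F(c)|² ≤ ∫_{polydisc} |F|²`.
For `c = θ + iλ` with `λ ∈ K` and `r` below the distance from `K` to `∂𝒞`, the polydisc lies in the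
tube, and once `|θ_k| ≥ R + r` it lies in `{|Re z_k| ≥ R}`. By Fubini
`∫_{tube} |F|² ≤ ‖F‖²_{H²} vol(𝒞) < ∞`, so the integral of `|F|²` over `{|Re z_k| ≥ R}` tends to
`0` as `R → ∞`, uniformly in the centre.
-/

open MeasureTheory Complex
open scoped ENNReal

/-- The tube `𝒯 = ℝⁿ + i𝒞 ⊂ ℂⁿ` over a base `𝒞 ⊂ ℝⁿ`. -/
def tube {n : ℕ} (C : Set (Fin n → ℝ)) : Set (Fin n → ℂ) :=
  {ζ : Fin n → ℂ | (fun i => (ζ i).im) ∈ C}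

/-- The horizontal slice `F_λ(θ) = F(θ + iλ)` of a function on a tube. -/
noncomputable def tubeSlice {n : ℕ} (F : (Fin n → ℂ) → ℂ) (lam : Fin n → ℝ) :
    (Fin n → ℝ) → ℂ :=
  fun θ => F fun i => (θ i : ℂ) + (lam i : ℂ) * Complex.I

/-- The Hardy norm `‖F‖ = sup_{λ ∈ 𝒞} ‖F(·+iλ)‖_{L²(ℝⁿ)}` (valued in `ℝ≥0∞`). -/
noncomputable def hardyNorm {n : ℕ} (C : Set (Fin n → ℝ)) (F : (Fin n → ℂ) → ℂ) : ℝ≥0∞ :=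
  ⨆ lam ∈ C, eLpNorm (tubeSlice F lam) 2 (volume : Measure (Fin n → ℝ))

/-- Membership in the Hardy space `H²(ℝⁿ + i𝒞)`. -/
def MemHardy {n : ℕ} (C : Set (Fin n → ℝ)) (F : (Fin n → ℂ) → ℂ) : Prop :=
  DifferentiableOn ℂ F (tube C) ∧
    (∀ lam ∈ C, MemLp (tubeSlice F lam) 2 (volume : Measure (Fin n → ℝ))) ∧
    hardyNorm C F < ⊤

open Metric Set Real Filter Topology

theorem norm_circleAverage_le {E : Type*} [NormedAddCommGroup E] [NormedSpace ℝ E]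
    (f : ℂ → E) (c : ℂ) (R : ℝ) :
    ‖circleAverage f c R‖ ≤ circleAverage (fun z => ‖f z‖) c R := by
  rw [circleAverage_def, circleAverage_def, norm_smul, smul_eq_mul,
    Real.norm_of_nonneg (by positivity)]
  gcongr
  exact intervalIntegral.norm_integral_le_integral_norm (by positivity)

theorem DifferentiableOn.norm_sq_le_circleAverage {φ : ℂ → ℂ} {c : ℂ} {R : ℝ}
    (hφ : DifferentiableOn ℂ φ (closedBall c |R|)) :
    ‖φ c‖ ^ 2 ≤ circleAverage (fun z => ‖φ z‖ ^ 2) c R := by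
  have hmean : circleAverage (fun z => φ z ^ 2) c R = φ c ^ 2 :=
    ((hφ.pow 2).diffContOnCl_ball subset_rfl).circleAverage
  have := norm_circleAverage_le (fun z => φ z ^ 2) c R
  simpa only [hmean, norm_pow] using this

theorem lintegral_circleMap_eq_two_pi_mul_circleAverage {f : ℂ → ℝ} {c : ℂ} {R : ℝ}
    (hf : ContinuousOn f (sphere c |R|)) (hf0 : ∀ z, 0 ≤ f z) :
    ∫⁻ θ in Ioo (-π) π, ENNReal.ofReal (f (circleMap c R θ)) =
      ENNReal.ofReal (2 * π * circleAverage f c R) := by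
  have hcont : Continuous fun θ => f (circleMap c R θ) :=
    hf.comp_continuous (continuous_circleMap c R) (circleMap_mem_sphere' c R)
  have hshift : 2 * π * circleAverage f c R = ∫ θ in (-π)..π, f (circleMap c R θ) := by
    rw [circleAverage_eq_integral_add (-π), smul_eq_mul, ← mul_assoc,
      mul_inv_cancel₀ (by positivity), one_mul,
      intervalIntegral.integral_comp_add_right (fun θ => f (circleMap c R θ))]
    congr 1 <;> ring
  rw [hshift, intervalIntegral.integral_of_le (by linarith [pi_pos]),
    ← setIntegral_congr_set Ioo_ae_eq_Ioc,
    ofReal_integral_eq_lintegral_ofReal (hcont.integrableOn_Icc.mono_set Ioo_subset_Icc_self)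
      (ae_of_all _ fun θ => hf0 _)]

theorem DifferentiableOn.two_pi_mul_enorm_sq_le_lintegral_circleMap {φ : ℂ → ℂ} {c : ℂ} {R : ℝ}
    (hφ : DifferentiableOn ℂ φ (closedBall c |R|)) :
    ENNReal.ofReal (2 * π) * ‖φ c‖ₑ ^ 2 ≤ ∫⁻ θ in Ioo (-π) π, ‖φ (circleMap c R θ)‖ₑ ^ 2 := by
  have hcont : ContinuousOn (fun z => ‖φ z‖ ^ 2) (sphere c |R|) :=
    (hφ.continuousOn.norm.pow 2).mono sphere_subset_closedBall
  calc ENNReal.ofReal (2 * π) * ‖φ c‖ₑ ^ 2 = ENNReal.ofReal (2 * π * ‖φ c‖ ^ 2) := by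
        rw [ENNReal.ofReal_mul two_pi_pos.le, ENNReal.ofReal_pow (norm_nonneg _), ofReal_norm]
    _ ≤ ENNReal.ofReal (2 * π * circleAverage (fun z => ‖φ z‖ ^ 2) c R) := by
        gcongr
        exact hφ.norm_sq_le_circleAverage
    _ = ∫⁻ θ in Ioo (-π) π, ‖φ (circleMap c R θ)‖ₑ ^ 2 := by
        rw [← lintegral_circleMap_eq_two_pi_mul_circleAverage hcont fun _ => by positivity]
        simp_rw [ENNReal.ofReal_pow (norm_nonneg _), ofReal_norm]

theorem circleMap_eq_add_polarCoord_symm (c : ℂ) (p : ℝ × ℝ) :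
    circleMap c p.1 p.2 = c + Complex.polarCoord.symm p := by
  rw [circleMap, Complex.polarCoord_symm_apply, exp_mul_I]
  push_cast
  ring

theorem Complex.volume_closedBall_eq_setLIntegral_Ioc (c : ℂ) {r : ℝ} (hr : 0 ≤ r) :
    volume (closedBall c r) = ∫⁻ s in Ioc 0 r, ENNReal.ofReal (2 * π * s) := by
  rw [← ofReal_integral_eq_lintegral_ofReal (by fun_prop : Continuous _).integrableOn_Ioc
      ((ae_restrict_iff' measurableSet_Ioc).2 (ae_of_all _ fun s hs => by
        have := hs.1; positivity)),
    ← intervalIntegral.integral_of_le hr, intervalIntegral.integral_const_mul, integral_id,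
    Complex.volume_closedBall, ← ENNReal.ofReal_pow hr, ← NNReal.coe_real_pi,
    ENNReal.ofReal_coe_nnreal.symm, ← ENNReal.ofReal_mul (by positivity)]
  ring_nf

theorem DifferentiableOn.volume_closedBall_mul_enorm_sq_le {φ : ℂ → ℂ} {c : ℂ} {r : ℝ}
    (hφ : DifferentiableOn ℂ φ (closedBall c r)) :
    volume (closedBall c r) * ‖φ c‖ₑ ^ 2 ≤ ∫⁻ z in closedBall c r, ‖φ z‖ₑ ^ 2 := by
  rcases le_or_gt r 0 with hr | hr
  · simp [ENNReal.ofReal_eq_zero.2 hr]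
  set f : ℂ → ℝ≥0∞ := fun z => ‖φ z‖ₑ ^ 2
  set S : Set (ℝ × ℝ) := Ioc 0 r ×ˢ Ioo (-π) π
  have hS : MeasurableSet S := measurableSet_Ioc.prod measurableSet_Ioo
  have hmaps : MapsTo (fun p : ℝ × ℝ => circleMap c p.1 p.2) S (closedBall c r) := fun p hp =>
    closedBall_subset_closedBall hp.1.2 (circleMap_mem_closedBall c hp.1.1.le p.2)
  have hmeas : AEMeasurable (fun p : ℝ × ℝ => ENNReal.ofReal p.1 * f (circleMap c p.1 p.2))
      (volume.restrict S) :=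
    (ENNReal.measurable_ofReal.comp measurable_fst).aemeasurable.mul <| ContinuousOn.aemeasurable
      (((ENNReal.continuous_pow 2).comp_continuousOn hφ.continuousOn.enorm).comp
        (by unfold circleMap; fun_prop) hmaps) hS
  have hcircle : ∀ s ∈ Ioc 0 r, ENNReal.ofReal (2 * π * s) * f c ≤
      ∫⁻ θ in Ioo (-π) π, ENNReal.ofReal s * f (circleMap c s θ) := by
    intro s hs
    rw [mul_comm (2 * π), ENNReal.ofReal_mul hs.1.le, mul_assoc]
    refine le_trans ?_ (lintegral_const_mul_le _ _)
    gcongr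
    exact (hφ.mono (by rw [abs_of_pos hs.1]; exact closedBall_subset_closedBall hs.2)
      ).two_pi_mul_enorm_sq_le_lintegral_circleMap
  calc volume (closedBall c r) * f c
      = ∫⁻ s in Ioc 0 r, ENNReal.ofReal (2 * π * s) * f c := by
        rw [Complex.volume_closedBall_eq_setLIntegral_Ioc c hr.le,
          lintegral_mul_const _ (by fun_prop)]
    _ ≤ ∫⁻ s in Ioc 0 r, ∫⁻ θ in Ioo (-π) π, ENNReal.ofReal s * f (circleMap c s θ) :=
        setLIntegral_mono' measurableSet_Ioc hcircle
    _ = ∫⁻ p in S, ENNReal.ofReal p.1 • (closedBall c r).indicator f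
          (c + Complex.polarCoord.symm p) := by
        rw [Measure.volume_eq_prod, ← setLIntegral_prod _ hmeas]
        refine setLIntegral_congr_fun hS fun p hp => ?_
        rw [← circleMap_eq_add_polarCoord_symm, indicator_of_mem (hmaps hp), smul_eq_mul]
    _ ≤ ∫⁻ p in polarCoord.target, ENNReal.ofReal p.1 • (closedBall c r).indicator f
          (c + Complex.polarCoord.symm p) :=
        lintegral_mono_set (prod_mono Ioc_subset_Ioi_self subset_rfl)
    _ = ∫⁻ z in closedBall c r, f z := by
        rw [Complex.lintegral_comp_polarCoord_symm fun z => (closedBall c r).indicator f (c + z),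
          lintegral_add_left_eq_self, lintegral_indicator measurableSet_closedBall]

theorem DifferentiableOn.prod_volume_closedBall_mul_enorm_sq_le_lmarginal {ι : Type*}
    [Fintype ι] [DecidableEq ι] {F : (ι → ℂ) → ℂ} {c : ι → ℂ} {r : ι → ℝ}
    (hF : DifferentiableOn ℂ F (univ.pi fun i => closedBall (c i) (r i))) (s : Finset ι)
    {x : ι → ℂ} (hx : x ∈ univ.pi fun i => closedBall (c i) (r i)) (hxc : ∀ i ∈ s, x i = c i) :
    (∏ i ∈ s, volume (closedBall (c i) (r i))) * ‖F x‖ₑ ^ 2 ≤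
      (∫⋯∫⁻_s, (univ.pi fun i => closedBall (c i) (r i)).indicator (fun z => ‖F z‖ₑ ^ 2)
        ∂fun _ => volume) x := by
  set P := univ.pi fun i => closedBall (c i) (r i)
  set f := P.indicator fun z => ‖F z‖ₑ ^ 2 with hf_def
  have hf : Measurable f := by
    classical
    rw [hf_def, ← piecewise_eq_indicator]
    exact ContinuousOn.measurable_piecewise
      ((ENNReal.continuous_pow 2).comp_continuousOn hF.continuousOn.enorm) continuousOn_const
      (MeasurableSet.univ_pi fun i => measurableSet_closedBall)
  induction s using Finset.induction_on generalizing x with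
  | empty => simp [f, indicator_of_mem hx]
  | @insert i s hi ih =>
    have hxi : x i = c i := hxc i (Finset.mem_insert_self i s)
    have hupdate : MapsTo (Function.update x i) (closedBall (c i) (r i)) P :=
      fun w hw => (update_mem_pi_iff_of_mem hx).2 fun _ => hw
    have hslice : DifferentiableOn ℂ (fun w => F (Function.update x i w))
        (closedBall (x i) (r i)) := by
      rw [hxi]
      exact hF.comp (fun w _ => (hasFDerivAt_update x w).differentiableAt.differentiableWithinAt)
        hupdate
    calc (∏ j ∈ insert i s, volume (closedBall (c j) (r j))) * ‖F x‖ₑ ^ 2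
        = (∏ j ∈ s, volume (closedBall (c j) (r j))) *
            (volume (closedBall (x i) (r i)) * ‖F (Function.update x i (x i))‖ₑ ^ 2) := by
          rw [Finset.prod_insert hi, Function.update_eq_self, hxi]
          ring
      _ ≤ (∏ j ∈ s, volume (closedBall (c j) (r j))) *
            ∫⁻ w in closedBall (c i) (r i), ‖F (Function.update x i w)‖ₑ ^ 2 := by
          rw [← hxi]
          gcongr
          exact hslice.volume_closedBall_mul_enorm_sq_le
      _ ≤ ∫⁻ w in closedBall (c i) (r i),
            (∏ j ∈ s, volume (closedBall (c j) (r j))) * ‖F (Function.update x i w)‖ₑ ^ 2 :=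
          lintegral_const_mul_le _ _
      _ ≤ ∫⁻ w in closedBall (c i) (r i), (∫⋯∫⁻_s, f ∂fun _ => volume) (Function.update x i w) :=
          setLIntegral_mono' measurableSet_closedBall fun w hw =>
            ih (hx := hupdate hw) (hxc := fun j hj => by
              rw [Function.update_of_ne (ne_of_mem_of_not_mem hj hi)]
              exact hxc j (Finset.mem_insert_of_mem hj))
      _ ≤ (∫⋯∫⁻_insert i s, f ∂fun _ => volume) x := by
          rw [lmarginal_insert _ hf hi]
          exact setLIntegral_le_lintegral _ _

theorem DifferentiableOn.volume_pi_closedBall_mul_enorm_sq_le {ι : Type*} [Fintype ι]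
    {F : (ι → ℂ) → ℂ} {c : ι → ℂ} {r : ι → ℝ}
    (hF : DifferentiableOn ℂ F (univ.pi fun i => closedBall (c i) (r i))) :
    volume (univ.pi fun i => closedBall (c i) (r i)) * ‖F c‖ₑ ^ 2 ≤
      ∫⁻ z in univ.pi (fun i => closedBall (c i) (r i)), ‖F z‖ₑ ^ 2 := by
  classical
  set P := univ.pi fun i => closedBall (c i) (r i)
  rcases P.eq_empty_or_nonempty with hPe | hPne
  · simp [hPe]
  have hc : c ∈ P := fun i _ =>
    mem_closedBall_self (nonempty_closedBall.1 (univ_pi_nonempty_iff.1 hPne i))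
  rw [volume_pi_pi, ← lintegral_indicator (MeasurableSet.univ_pi fun i => measurableSet_closedBall),
    volume_pi, lintegral_eq_lmarginal_univ c]
  exact hF.prod_volume_closedBall_mul_enorm_sq_le_lmarginal Finset.univ hc fun _ _ => rfl

theorem lintegral_le_lintegral_im_lintegral_re {ι : Type*} [Fintype ι]
    (G : (ι → ℂ) → ℝ≥0∞) :
    ∫⁻ z, G z ≤ ∫⁻ lam : ι → ℝ, ∫⁻ θ : ι → ℝ, G fun i => (θ i : ℂ) + (lam i : ℂ) * I := by
  set E : (ι → ℂ) ≃ᵐ (ι → ℝ) × (ι → ℝ) :=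
    ((MeasurableEquiv.piCongrRight fun _ => measurableEquivRealProd).trans
      (MeasurableEquiv.arrowProdEquivProdArrow ℝ ℝ ι)).trans MeasurableEquiv.prodComm
  have hE : MeasurePreserving E volume volume :=
    (Measure.measurePreserving_swap.comp (volume_measurePreserving_arrowProdEquivProdArrow ℝ ℝ ι)
      ).comp (volume_preserving_pi fun _ => volume_preserving_equiv_real_prod)
  have hEsymm : ∀ p : (ι → ℝ) × (ι → ℝ), E.symm p = fun i => (p.2 i : ℂ) + (p.1 i : ℂ) * I :=
    fun p => funext fun i => mk_eq_add_mul_I _ _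
  rw [← hE.symm.lintegral_comp_emb E.symm.measurableEmbedding, Measure.volume_eq_prod]
  simpa only [hEsymm] using lintegral_prod_le _

theorem setLIntegral_tube_le_hardyNorm_sq_mul_volume {n : ℕ} {C : Set (Fin n → ℝ)}
    (hC : MeasurableSet C) (F : (Fin n → ℂ) → ℂ) :
    ∫⁻ z in tube C, ‖F z‖ₑ ^ 2 ≤ hardyNorm C F ^ 2 * volume C := by
  have htube : MeasurableSet (tube C) :=
    hC.preimage (measurable_pi_lambda _ fun i => measurable_im.comp (measurable_pi_apply i))
  have hslice : ∀ lam ∈ C, ∫⁻ θ, ‖tubeSlice F lam θ‖ₑ ^ 2 ≤ hardyNorm C F ^ 2 := by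
    intro lam hlam
    have h := eLpNorm_nnreal_pow_eq_lintegral (f := tubeSlice F lam) (μ := volume)
      (p := 2) two_ne_zero
    simp only [NNReal.coe_ofNat, ENNReal.coe_ofNat, ENNReal.rpow_two] at h
    rw [← h]
    gcongr
    exact le_iSup₂ (f := fun lam _ => eLpNorm (tubeSlice F lam) 2 volume) lam hlam
  calc ∫⁻ z in tube C, ‖F z‖ₑ ^ 2
      = ∫⁻ z, (tube C).indicator (fun z => ‖F z‖ₑ ^ 2) z := (lintegral_indicator htube _).symm
    _ ≤ ∫⁻ lam : Fin n → ℝ, ∫⁻ θ : Fin n → ℝ, (tube C).indicator (fun z => ‖F z‖ₑ ^ 2)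
          fun i => (θ i : ℂ) + (lam i : ℂ) * I := lintegral_le_lintegral_im_lintegral_re _
    _ ≤ ∫⁻ lam, C.indicator (fun _ => hardyNorm C F ^ 2) lam := by
        refine lintegral_mono fun lam => ?_
        by_cases hlam : lam ∈ C
        · simpa [tube, hlam, tubeSlice] using hslice lam hlam
        · simp [tube, hlam]
    _ = hardyNorm C F ^ 2 * volume C := lintegral_indicator_const hC _

theorem tendsto_setLIntegral_superlevel_zero {α : Type*} [MeasurableSpace α] {μ : Measure α}
    {f : α → ℝ≥0∞} (hf : ∫⁻ x, f x ∂μ ≠ ∞) {g : α → ℝ} (hg : Measurable g) :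
    Tendsto (fun R : ℝ => ∫⁻ x in {x | R ≤ g x}, f x ∂μ) atTop (𝓝 0) := by
  have hmeas : ∀ R : ℝ, MeasurableSet {x | R ≤ g x} := fun R => measurableSet_le measurable_const hg
  have hempty : ⋂ R : ℝ, {x | R ≤ g x} = ∅ :=
    eq_empty_of_forall_notMem fun x hx => by
      have : g x + 1 ≤ g x := mem_iInter.1 hx (g x + 1)
      linarith
  have hfin : μ.withDensity f {x | 0 ≤ g x} ≠ ∞ :=
    ne_top_of_le_ne_top (by rwa [withDensity_apply _ MeasurableSet.univ, Measure.restrict_univ])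
      (measure_mono (subset_univ _))
  have := tendsto_measure_iInter_atTop (fun R => (hmeas R).nullMeasurableSet)
    (fun R R' h x hx => le_trans h hx) ⟨0, hfin⟩
  rw [hempty, measure_empty] at this
  simpa only [Function.comp_def, withDensity_apply _ (hmeas _)] using this

theorem pi_closedBall_subset_tube {n : ℕ} {C K : Set (Fin n → ℝ)} {δ r : ℝ}
    (hKC : thickening δ K ⊆ C) (hr : 0 ≤ r) (hrδ : r < δ) {c : Fin n → ℂ}
    (hc : (fun i => (c i).im) ∈ K) : univ.pi (fun i => closedBall (c i) r) ⊆ tube C := by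
  intro z hz
  refine hKC (mem_thickening_iff.2 ⟨_, hc, ((dist_pi_le_iff hr).2 fun i => ?_).trans_lt hrδ⟩)
  calc dist (z i).im (c i).im = |(z i - c i).im| := by rw [Real.dist_eq, sub_im]
    _ ≤ ‖z i - c i‖ := abs_im_le_norm _
    _ ≤ r := by simpa [Complex.dist_eq] using hz i (mem_univ i)

theorem abs_re_sub_le_of_mem_pi_closedBall {ι : Type*} {c z : ι → ℂ} {r : ℝ}
    (hz : z ∈ univ.pi fun i => closedBall (c i) r) (k : ι) : |(c k).re| - r ≤ |(z k).re| := by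
  have hre : |(c k - z k).re| ≤ r :=
    (abs_re_le_norm _).trans (by simpa [Complex.dist_eq, norm_sub_rev] using hz k (mem_univ k))
  rw [sub_re] at hre
  linarith [abs_sub_abs_le_abs_sub (c k).re (z k).re]

theorem statement8_general {n : ℕ} (C : Set (Fin n → ℝ))
    (hCopen : IsOpen C) (hCbdd : Bornology.IsBounded C)
    (F : (Fin n → ℂ) → ℂ) (hF : MemHardy C F)
    (k : Fin n) (θ₀ : Fin n → ℝ)
    (K : Set (Fin n → ℝ)) (hK : IsCompact K) (hKC : K ⊆ C) :
    ∀ ε : ℝ, 0 < ε → ∃ R : ℝ, ∀ t : ℝ, R ≤ |t| → ∀ lam ∈ K,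
      ‖F fun i => ((Function.update θ₀ k t) i : ℂ) + (lam i : ℂ) * Complex.I‖ ≤ ε := by
  obtain ⟨hFdiff, -, hFnorm⟩ := hF
  intro ε hε
  obtain ⟨δ, hδ, hKδ⟩ := hK.exists_thickening_subset_open hCopen hKC
  set r := δ / 2
  set V : ℝ≥0∞ := (ENNReal.ofReal r ^ 2 * NNReal.pi) ^ n
  have hV0 : V ≠ 0 := by simp [V, r, hδ, NNReal.pi_pos.ne']
  have hVtop : V ≠ ∞ := by simp [V, ENNReal.mul_eq_top]
  have hmass : ∫⁻ z in tube C, ‖F z‖ₑ ^ 2 ≠ ∞ :=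
    ((setLIntegral_tube_le_hardyNorm_sq_mul_volume hCopen.measurableSet F).trans_lt
      (ENNReal.mul_lt_top (ENNReal.pow_lt_top hFnorm) hCbdd.measure_lt_top)).ne
  obtain ⟨R, hR⟩ := ((tendsto_setLIntegral_superlevel_zero hmass
    (g := fun z => |(z k).re|) (by fun_prop)).eventually
      (gt_mem_nhds (ENNReal.mul_pos hV0 (pow_ne_zero 2 (ENNReal.ofReal_pos.2 hε).ne')))).exists
  refine ⟨R + r, fun t ht lam hlam => ?_⟩
  set c : Fin n → ℂ := fun i => ((Function.update θ₀ k t) i : ℂ) + (lam i : ℂ) * Complex.I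
  have hck : (c k).re = t := by simp [c]
  have hP : (univ.pi fun i => closedBall (c i) r) ⊆ {z | R ≤ |(z k).re|} ∩ tube C :=
    subset_inter (fun z hz => (le_sub_iff_add_le.2 ht).trans
        (hck ▸ abs_re_sub_le_of_mem_pi_closedBall hz k))
      (pi_closedBall_subset_tube hKδ (by positivity) (half_lt_self hδ) (by simpa [c] using hlam))
  have hbound : V * ‖F c‖ₑ ^ 2 ≤ ∫⁻ z in {z | R ≤ |(z k).re|} ∩ tube C, ‖F z‖ₑ ^ 2 := by
    simpa [V, volume_pi_pi] using ((hFdiff.mono (hP.trans inter_subset_right)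
      ).volume_pi_closedBall_mul_enorm_sq_le).trans (lintegral_mono_set hP)
  rw [← Measure.restrict_restrict (measurableSet_le measurable_const (by fun_prop))] at hbound
  have hsq := (ENNReal.mul_lt_mul_iff_right hV0 hVtop).1 (hbound.trans_lt hR)
  rw [ENNReal.pow_lt_pow_left_iff two_ne_zero, ← ofReal_norm,
    ENNReal.ofReal_lt_ofReal_iff hε] at hsq
  exact hsq.le

/-- a Hardy space function `F ∈ H²(ℝⁿ + i𝒞)` decays in any single variable:
for fixed `k`, fixed real values of the other variables, and any compact `K ⊂ 𝒞`,
`sup_{λ ∈ K} |F(θ₁,…,θ_k,…,θ_n + iλ)| → 0` as `|θ_k| → ∞`. -/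
theorem statement8 {n : ℕ} (C : Set (Fin n → ℝ))
    (hCopen : IsOpen C) (hCbdd : Bornology.IsBounded C) (hCconv : Convex ℝ C)
    (F : (Fin n → ℂ) → ℂ) (hF : MemHardy C F)
    (k : Fin n) (θ₀ : Fin n → ℝ)
    (K : Set (Fin n → ℝ)) (hK : IsCompact K) (hKC : K ⊆ C) :
    ∀ ε : ℝ, 0 < ε → ∃ R : ℝ, ∀ t : ℝ, R ≤ |t| → ∀ lam ∈ K,
      ‖F fun i => ((Function.update θ₀ k t) i : ℂ) + (lam i : ℂ) * Complex.I‖ ≤ ε :=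
  statement8_general C hCopen hCbdd F hF k θ₀ K hK hKC
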